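/- Burnt gas temperature with distinct specific heats: let c < 0, ṁ = −ρ_s·c > 0, c_s, c_p > 0, λ_s, λ_g > 0, D_s = λ_s/(ρ_s·c_s), ν < 0, M > 0, Q_mol ∈ ℝ and Q_p ∈ ℝ. Suppose T : ℝ → ℝ is continuous, C² on (−∞,0) and on (0,∞), with lim_{x→−∞} T(x) = T₀, lim_{x→−∞} T′(x) = 0, lim_{x→+∞} T(x) = T_f and lim_{x→+∞} T′(x) = 0; on the solid side −c·T′(x) − D_s·T″(x) = 0 for x < 0; on the gas side ṁ·T′(x) − (λ_g/c_p)·T″(x) = (Q_mol/c_p)·ω(x) for x > 0, where ω is integrable with ∫₀^∞ ω = −ṁ/(M·ν); and the interface energy balance λ_s·T′(0⁻) = ṁ·Q_p + λ_g·T′(0⁺) holds, T being continuous at 0 with surface value T_s = T(0). Then, with Q_g = −Q_mol/(ν·M), the burnt gas temperature satisfies T_f = (1 − c_s/c_p)·T_s + (c_s/c_p)·T₀ + (Q_p + Q_g)/c_p. -/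

import Mathlib

/-!
On each side of the interface the travelling-wave equation is a total derivative: on the solid
side `(-c·T - D_s·T')' = 0`, on the gas side `(ṁ·T - (λg/cp)·T')' = (Q_mol/cp)·ω`. Integrating
from `-∞` to `0⁻` and from `0⁺` to `+∞` (improper fundamental theorem of calculus, with one-sided
limits at the interface) gives `λs·T'(0⁻) = ṁ·cs·(T_s - T₀)` and
`ṁ·(T_f - T_s) + (λg/cp)·T'(0⁺) = (Q_mol/cp)·∫ω`. Eliminating the interface gradients with the
energy balance and dividing by `ṁ ≠ 0` gives `T_f`.
-/

open Filter Topology MeasureTheory Set Function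

section ImproperFTC

variable {E : Type*} [NormedAddCommGroup E] [NormedSpace ℝ E] [CompleteSpace E]
  {f f' : ℝ → E} {a : ℝ} {l m : E}

theorem integral_Ioi_of_hasDerivAt_of_tendsto_nhdsGT
    (hderiv : ∀ x ∈ Ioi a, HasDerivAt f (f' x) x) (hint : IntegrableOn f' (Ioi a))
    (hleft : Tendsto f (𝓝[>] a) (𝓝 l)) (htop : Tendsto f atTop (𝓝 m)) :
    ∫ x in Ioi a, f' x = m - l := by
  classical
  have hcont : ContinuousWithinAt (update f a l) (Ici a) a := by
    rwa [continuousWithinAt_update_same, Ici_sdiff_left]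
  have hderiv' : ∀ x ∈ Ioi a, HasDerivAt (update f a l) (f' x) x := fun x hx =>
    (hderiv x hx).congr_of_eventuallyEq <|
      (eventually_ne_nhds (ne_of_gt hx)).mono fun y hy => update_of_ne hy l f
  have htop' : Tendsto (update f a l) atTop (𝓝 m) :=
    htop.congr' <| (eventually_gt_atTop a).mono fun y hy => (update_of_ne hy.ne' l f).symm
  simpa using integral_Ioi_of_hasDerivAt_of_tendsto hcont hderiv' hint htop'

theorem integral_Iic_of_hasDerivAt_of_tendsto_nhdsLT
    (hderiv : ∀ x ∈ Iio a, HasDerivAt f (f' x) x) (hint : IntegrableOn f' (Iic a))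
    (hright : Tendsto f (𝓝[<] a) (𝓝 m)) (hbot : Tendsto f atBot (𝓝 l)) :
    ∫ x in Iic a, f' x = m - l := by
  classical
  have hcont : ContinuousWithinAt (update f a m) (Iic a) a := by
    rwa [continuousWithinAt_update_same, Iic_sdiff_right]
  have hderiv' : ∀ x ∈ Iio a, HasDerivAt (update f a m) (f' x) x := fun x hx =>
    (hderiv x hx).congr_of_eventuallyEq <|
      (eventually_ne_nhds (ne_of_lt hx)).mono fun y hy => update_of_ne hy m f
  have hbot' : Tendsto (update f a m) atBot (𝓝 l) :=
    hbot.congr' <| (eventually_lt_atBot a).mono fun y hy => (update_of_ne hy.ne m f).symm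
  simpa using integral_Iic_of_hasDerivAt_of_tendsto hcont hderiv' hint hbot'

end ImproperFTC

section FirstIntegral

variable {T : ℝ → ℝ} {p α β : ℝ}

theorem hasDerivAt_linear_comb_deriv {x : ℝ} (h₁ : DifferentiableAt ℝ T x)
    (h₂ : DifferentiableAt ℝ (deriv T) x) :
    HasDerivAt (fun y => α * T y - β * deriv T y)
      (α * deriv T x - β * deriv (deriv T) x) x :=
  (h₁.hasDerivAt.const_mul α).sub (h₂.hasDerivAt.const_mul β)

theorem first_integral_Iio {T₀ Tp g : ℝ}
    (h₁ : ∀ x < p, DifferentiableAt ℝ T x) (h₂ : ∀ x < p, DifferentiableAt ℝ (deriv T) x)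
    (hode : ∀ x < p, α * deriv T x - β * deriv (deriv T) x = 0)
    (hT : Tendsto T (𝓝[<] p) (𝓝 Tp)) (hg : Tendsto (deriv T) (𝓝[<] p) (𝓝 g))
    (hTbot : Tendsto T atBot (𝓝 T₀)) (hT'bot : Tendsto (deriv T) atBot (𝓝 0)) :
    α * Tp - β * g = α * T₀ := by
  have hderiv : ∀ x ∈ Iio p, HasDerivAt (fun y => α * T y - β * deriv T y) 0 x := fun x hx =>
    hode x hx ▸ hasDerivAt_linear_comb_deriv (h₁ x hx) (h₂ x hx)
  have h := integral_Iic_of_hasDerivAt_of_tendsto_nhdsLT hderiv integrableOn_zero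
    ((hT.const_mul α).sub (hg.const_mul β)) ((hTbot.const_mul α).sub (hT'bot.const_mul β))
  simp only [integral_zero, mul_zero, sub_zero] at h
  linarith

theorem first_integral_Ioi {ω : ℝ → ℝ} {k Tp g T₁ : ℝ}
    (h₁ : ∀ x > p, DifferentiableAt ℝ T x) (h₂ : ∀ x > p, DifferentiableAt ℝ (deriv T) x)
    (hode : ∀ x > p, α * deriv T x - β * deriv (deriv T) x = k * ω x)
    (hω : IntegrableOn ω (Ioi p))
    (hT : Tendsto T (𝓝[>] p) (𝓝 Tp)) (hg : Tendsto (deriv T) (𝓝[>] p) (𝓝 g))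
    (hTtop : Tendsto T atTop (𝓝 T₁)) (hT'top : Tendsto (deriv T) atTop (𝓝 0)) :
    k * ∫ x in Ioi p, ω x = α * T₁ - (α * Tp - β * g) := by
  have hderiv : ∀ x ∈ Ioi p, HasDerivAt (fun y => α * T y - β * deriv T y) (k * ω x) x :=
    fun x hx => hode x hx ▸ hasDerivAt_linear_comb_deriv (h₁ x hx) (h₂ x hx)
  rw [← integral_const_mul, integral_Ioi_of_hasDerivAt_of_tendsto_nhdsGT hderiv
    (hω.const_mul k) ((hT.const_mul α).sub (hg.const_mul β))
    ((hTtop.const_mul α).sub (hT'top.const_mul β)), mul_zero, sub_zero]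

end FirstIntegral

theorem burnt_gas_temperature_distinct_specific_heats_general
    (c ρs mdot cs cp lams lamg ν M Qmol Qp T₀ Tf : ℝ)
    (hc : c < 0) (hρs : 0 < ρs) (hmdot : mdot = -(ρs * c))
    (hcs : 0 < cs)
    (T ω : ℝ → ℝ)
    (hTcont : Continuous T)
    (hTd1 : ∀ x : ℝ, x ≠ 0 → DifferentiableAt ℝ T x)
    (hTd2 : ∀ x : ℝ, x ≠ 0 → DifferentiableAt ℝ (deriv T) x)
    (hTminf : Filter.Tendsto T Filter.atBot (nhds T₀))
    (hT'minf : Filter.Tendsto (deriv T) Filter.atBot (nhds 0))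
    (hTpinf : Filter.Tendsto T Filter.atTop (nhds Tf))
    (hT'pinf : Filter.Tendsto (deriv T) Filter.atTop (nhds 0))
    (hsolid : ∀ x < (0:ℝ),
      -c * deriv T x - (lams / (ρs * cs)) * deriv (deriv T) x = 0)
    (hgas : ∀ x > (0:ℝ),
      mdot * deriv T x - (lamg / cp) * deriv (deriv T) x = (Qmol / cp) * ω x)
    (hωint : MeasureTheory.IntegrableOn ω (Set.Ioi 0))
    (hωtot : (∫ x in Set.Ioi (0:ℝ), ω x) = -mdot / (M * ν))
    (gl gr : ℝ)
    (hgl : Filter.Tendsto (deriv T) (nhdsWithin 0 (Set.Iio 0)) (nhds gl))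
    (hgr : Filter.Tendsto (deriv T) (nhdsWithin 0 (Set.Ioi 0)) (nhds gr))
    (hinterface : lams * gl = mdot * Qp + lamg * gr) :
    Tf = (1 - cs / cp) * T 0 + (cs / cp) * T₀ + (Qp + -Qmol / (ν * M)) / cp := by
  have hsolid_flux := first_integral_Iio (fun x hx => hTd1 x hx.ne) (fun x hx => hTd2 x hx.ne)
    hsolid (hTcont.continuousAt.tendsto.mono_left nhdsWithin_le_nhds) hgl hTminf hT'minf
  have hgas_flux := first_integral_Ioi (fun x hx => hTd1 x hx.ne') (fun x hx => hTd2 x hx.ne')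
    hgas hωint (hTcont.continuousAt.tendsto.mono_left nhdsWithin_le_nhds) hgr hTpinf hT'pinf
  have hmdot_ne : mdot ≠ 0 := by
    rw [hmdot, neg_ne_zero]
    exact mul_ne_zero hρs.ne' hc.ne
  have hsolid_gradient : lams * gl = mdot * cs * (T 0 - T₀) := by
    have hρcs : ρs * cs ≠ 0 := mul_ne_zero hρs.ne' hcs.ne'
    field_simp at hsolid_flux
    rw [hmdot]
    linear_combination -hsolid_flux
  rw [hωtot] at hgas_flux
  refine mul_left_cancel₀ hmdot_ne ?_
  linear_combination -hgas_flux - cp⁻¹ * (hinterface.symm.trans hsolid_gradient)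

/-- Burnt gas temperature with distinct specific heats `c_s ≠ c_p`: with `c < 0` the
regression velocity, `ṁ = −ρs·c > 0`, specific heats `cs, cp > 0`, conductivities
`λs, λg > 0`, `D_s = λs/(ρs·cs)`, `ν < 0`, `M > 0`, if the temperature `T` is continuous
on `ℝ`, C² away from the interface `x = 0`, tends to `T₀` (with vanishing gradient) at
`−∞` and to `T_f` (with vanishing gradient) at `+∞`, satisfies the solid heat equation
`−c·T′ − D_s·T″ = 0` on `(−∞,0)` and the gas energy equation
`ṁ·T′ − (λg/cp)·T″ = (Q_mol/cp)·ω` on `(0,∞)` with `∫₀^∞ ω = −ṁ/(M·ν)`, and the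
interface energy balance `λs·T′(0⁻) = ṁ·Q_p + λg·T′(0⁺)` holds with surface
temperature `T_s = T(0)`, then with `Q_g = −Q_mol/(ν·M)` we have
`T_f = (1 − cs/cp)·T_s + (cs/cp)·T₀ + (Q_p + Q_g)/cp`. -/
theorem burnt_gas_temperature_distinct_specific_heats
    (c ρs mdot cs cp lams lamg ν M Qmol Qp T₀ Tf : ℝ)
    (hc : c < 0) (hρs : 0 < ρs) (hmdot : mdot = -(ρs * c))
    (hcs : 0 < cs) (hcp : 0 < cp) (hlams : 0 < lams) (hlamg : 0 < lamg)
    (hν : ν < 0) (hM : 0 < M)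
    (T ω : ℝ → ℝ)
    (hTcont : Continuous T)
    (hTd1 : ∀ x : ℝ, x ≠ 0 → DifferentiableAt ℝ T x)
    (hTd2 : ∀ x : ℝ, x ≠ 0 → DifferentiableAt ℝ (deriv T) x)
    (hTminf : Filter.Tendsto T Filter.atBot (nhds T₀))
    (hT'minf : Filter.Tendsto (deriv T) Filter.atBot (nhds 0))
    (hTpinf : Filter.Tendsto T Filter.atTop (nhds Tf))
    (hT'pinf : Filter.Tendsto (deriv T) Filter.atTop (nhds 0))
    (hsolid : ∀ x < (0:ℝ),
      -c * deriv T x - (lams / (ρs * cs)) * deriv (deriv T) x = 0)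
    (hgas : ∀ x > (0:ℝ),
      mdot * deriv T x - (lamg / cp) * deriv (deriv T) x = (Qmol / cp) * ω x)
    (hωint : MeasureTheory.IntegrableOn ω (Set.Ioi 0))
    (hωtot : (∫ x in Set.Ioi (0:ℝ), ω x) = -mdot / (M * ν))
    (gl gr : ℝ)
    (hgl : Filter.Tendsto (deriv T) (nhdsWithin 0 (Set.Iio 0)) (nhds gl))
    (hgr : Filter.Tendsto (deriv T) (nhdsWithin 0 (Set.Ioi 0)) (nhds gr))
    (hinterface : lams * gl = mdot * Qp + lamg * gr) :
    Tf = (1 - cs / cp) * T 0 + (cs / cp) * T₀ + (Qp + -Qmol / (ν * M)) / cp :=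
  burnt_gas_temperature_distinct_specific_heats_general c ρs mdot cs cp lams lamg ν M Qmol Qp T₀ Tf
    hc hρs hmdot hcs T ω hTcont hTd1 hTd2 hTminf hT'minf hTpinf hT'pinf hsolid hgas hωint hωtot gl
    gr hgl hgr hinterface
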